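/- The kill rule is confluent with itself: any overlap of two instances of the kill rule kill(f) \ G^F ⇔ f ∈ F | true, under the assumption that each state contains at most one kill(f) constraint per justification f, yields a joinable critical pair. -/

import Mathlib

variable {C J : Type*} [DecidableEq C] [DecidableEq J]

/-- Annotated constraints of CHR with justifications, including the reserved
`rem` and `kill` constraints. `user c F` is a (non-reserved) constraint `c`
annotated with justification set `F`; `rem c Fc F` remembers the removed
constraint `c^{Fc}` and is itself annotated with `F`; `kill f` requests
logical retraction of justification `f`. -/
inductive AC (C J : Type*) where
  | user : C → Finset J → AC C J
  | rem : C → Finset J → Finset J → AC C J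
  | kill : J → AC C J
deriving DecidableEq

/-- The kill rule: `kill(f) \ G^F ⇔ f ∈ F | true`, for non-reserved `G`. -/
def KillStep (S T : Multiset (AC C J)) : Prop :=
  ∃ (f : J) (c : C) (F : Finset J) (G : Multiset (AC C J)),
    f ∈ F ∧ S = AC.kill f ::ₘ AC.user c F ::ₘ G ∧ T = AC.kill f ::ₘ G

/-- The revive rule: `kill(f) \ rem(G^{F_c})^F ⇔ f ∈ F | G^{F_c}`. -/
def ReviveStep (S T : Multiset (AC C J)) : Prop :=
  ∃ (f : J) (c : C) (Fc F : Finset J) (G : Multiset (AC C J)),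
    f ∈ F ∧ S = AC.kill f ::ₘ AC.rem c Fc F ::ₘ G ∧
      T = AC.kill f ::ₘ AC.user c Fc ::ₘ G

/-- A state contains at most one `kill(f)` constraint per justification `f`. -/
def AtMostOneKill (S : Multiset (AC C J)) : Prop :=
  ∀ f : J, S.count (AC.kill f) ≤ 1

/-! A kill step deletes one user constraint and keeps its `kill(f)`. Two steps from the
same state therefore either delete the same constraint, or each remains applicable after
the other, and the two deletions commute. -/

theorem killStep_iff {S T : Multiset (AC C J)} :
    KillStep S T ↔ ∃ (f : J) (c : C) (F : Finset J), f ∈ F ∧ AC.kill f ∈ S ∧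
      AC.user c F ∈ S ∧ T = S.erase (AC.user c F) := by
  constructor
  · rintro ⟨f, c, F, G, hf, rfl, rfl⟩
    refine ⟨f, c, F, hf, by simp, by simp, ?_⟩
    rw [Multiset.erase_cons_tail _ (by simp), Multiset.erase_cons_head]
  · rintro ⟨f, c, F, hf, hk, hu, rfl⟩
    have hk' : AC.kill f ∈ S.erase (AC.user c F) := (Multiset.mem_erase_of_ne (by simp)).2 hk
    refine ⟨f, c, F, (S.erase (AC.user c F)).erase (AC.kill f), hf, ?_, ?_⟩
    · rw [Multiset.cons_swap, Multiset.cons_erase hk', Multiset.cons_erase hu]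
    · rw [Multiset.cons_erase hk']

theorem killStep_erase_user {S : Multiset (AC C J)} {f : J} {c c' : C} {F F' : Finset J}
    (hf : f ∈ F) (hk : AC.kill f ∈ S) (hu : AC.user c F ∈ S)
    (hne : AC.user c' F' ≠ AC.user c F) :
    KillStep (S.erase (AC.user c' F')) ((S.erase (AC.user c' F')).erase (AC.user c F)) :=
  killStep_iff.2 ⟨f, c, F, hf, (Multiset.mem_erase_of_ne (by simp)).2 hk,
    (Multiset.mem_erase_of_ne hne.symm).2 hu, rfl⟩

theorem kill_confluent_with_kill_general (S T₁ T₂ : Multiset (AC C J))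
    (h₁ : KillStep S T₁) (h₂ : KillStep S T₂) :
    ∃ U₁ U₂ : Multiset (AC C J),
      Relation.ReflTransGen KillStep T₁ U₁ ∧
      Relation.ReflTransGen KillStep T₂ U₂ ∧ U₁ = U₂ := by
  obtain ⟨f₁, c₁, F₁, hf₁, hk₁, hu₁, rfl⟩ := killStep_iff.1 h₁
  obtain ⟨f₂, c₂, F₂, hf₂, hk₂, hu₂, rfl⟩ := killStep_iff.1 h₂
  by_cases h : AC.user c₁ F₁ = AC.user c₂ F₂
  · exact ⟨_, _, .refl, .refl, by rw [h]⟩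
  exact ⟨_, _, .single (killStep_erase_user hf₂ hk₂ hu₂ h),
    .single (killStep_erase_user hf₁ hk₁ hu₁ (Ne.symm h)), Multiset.erase_comm _ _ _⟩

/-- The kill rule is confluent with itself: under the assumption of at most one
`kill(f)` per justification, any critical pair arising from two applications of
the kill rule to an overlap state is joinable. -/
theorem kill_confluent_with_kill (S T₁ T₂ : Multiset (AC C J))
    (hS : AtMostOneKill S) (h₁ : KillStep S T₁) (h₂ : KillStep S T₂) :
    ∃ U₁ U₂ : Multiset (AC C J),
      Relation.ReflTransGen KillStep T₁ U₁ ∧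
      Relation.ReflTransGen KillStep T₂ U₂ ∧ U₁ = U₂ :=
  kill_confluent_with_kill_general S T₁ T₂ h₁ h₂
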